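/- arXiv:2305.09247 — 4 statements merged into one kernel-verified Lean document; each statement's English description precedes it below -/
import Mathlib

section
/- Let (X_i)_{i ∈ ℕ} be an i.i.d. sequence of real-valued random variables, let a ≤ b be reals, and set p_L = P(X_1 < a), p_U = P(X_1 > b) and p_max = max(p_L, p_U). If p_max ≤ 0.169, then there exists a constant C > 0 such that for every odd positive integer t, P(Error_t) ≤ C · t^{-1/2} · 0.75^t. -/
/-!
If the median of `X_0, …, X_{2m}` lies below `a`, then at least `m + 1` of the `X_i` lie below
`a`, and likewise above `b`. With `q = 0.169` bounding both tail probabilities, the exponential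
Chernoff bound with tilt `e^c = (1 - q) / q` bounds the probability that at least `m + 1` of
`2m + 1` independent events of probability `≤ q` occur by `2q (4q(1 - q))^m`. Since
`4q(1 - q) = 0.561756 < 0.75²`, the gap between the two geometric rates absorbs the factor `√t`.
-/

open MeasureTheory ProbabilityTheory

/-- The median of `t` reals: the `⌈t/2⌉`-th smallest among them. -/
noncomputable def median (t : ℕ) (x : Fin t → ℝ) : ℝ :=
  ((Finset.univ.val.map x).sort (· ≤ ·)).getD ((t + 1) / 2 - 1) 0

/-- `Error_t`: the event that the median of `X_1, …, X_t` is `< a` or `> b`. -/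
def errorEvent {Ω : Type*} (X : ℕ → Ω → ℝ) (a b : ℝ) (t : ℕ) : Set Ω :=
  {ω | median t (fun i : Fin t => X i ω) < a ∨ b < median t (fun i : Fin t => X i ω)}

open Finset Real

namespace List

variable {α : Type*} [LinearOrder α] {l : List α} {i : ℕ}

theorem SortedLE.succ_le_countP_lt (hl : l.SortedLE) (hi : i < l.length) {a : α}
    (ha : l[i] < a) : i + 1 ≤ l.countP (· < a) :=
  calc i + 1 = (l.take (i + 1)).countP (· < a) := by
        rw [countP_eq_length.2, length_take]
        · omega
        intro y hy
        obtain ⟨j, hj, rfl⟩ := mem_take_iff_getElem.1 hy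
        exact decide_eq_true
          ((hl.getElem_le_getElem_of_le (i := j) (j := i) (by omega)).trans_lt ha)
    _ ≤ l.countP (· < a) := (take_sublist _ _).countP_le

theorem SortedLE.length_sub_le_countP_gt (hl : l.SortedLE) (hi : i < l.length) {b : α}
    (hb : b < l[i]) : l.length - i ≤ l.countP (b < ·) :=
  calc l.length - i = (l.drop i).countP (b < ·) := by
        rw [countP_eq_length.2, length_drop]
        intro y hy
        obtain ⟨j, hj, rfl⟩ := mem_drop_iff_getElem.1 hy
        exact decide_eq_true
          (hb.trans_le (hl.getElem_le_getElem_of_le (i := i) (j := i + j) (by omega)))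
    _ ≤ l.countP (b < ·) := (drop_sublist _ _).countP_le

end List

section Median

variable {t : ℕ} (x : Fin t → ℝ)

theorem countP_sort_map_univ (p : ℝ → Prop) [DecidablePred p] :
    ((univ.val.map x).sort (· ≤ ·)).countP p = #{i | p (x i)} := by
  rw [← Multiset.coe_countP, Multiset.sort_eq, Multiset.countP_map]
  rfl

theorem median_eq_getElem (ht : 0 < t) :
    median t x = ((univ.val.map x).sort (· ≤ ·))[(t + 1) / 2 - 1]'(by simp; omega) :=
  List.getD_eq_getElem _ _ _

theorem half_le_card_lt_of_median_lt (ht : 0 < t) {a : ℝ} (h : median t x < a) :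
    (t + 1) / 2 ≤ #{i | x i < a} := by
  rw [median_eq_getElem x ht] at h
  rw [← countP_sort_map_univ x (· < a)]
  have := (List.sortedLE_iff_pairwise.2 (Multiset.pairwise_sort _ _)).succ_le_countP_lt _ h
  omega

theorem half_le_card_gt_of_lt_median (ht : Odd t) {b : ℝ} (h : b < median t x) :
    (t + 1) / 2 ≤ #{i | b < x i} := by
  rw [median_eq_getElem x ht.pos] at h
  rw [← countP_sort_map_univ x (b < ·)]
  have := (List.sortedLE_iff_pairwise.2 (Multiset.pairwise_sort _ _)).length_sub_le_countP_gt _ h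
  simp only [Multiset.length_sort, Multiset.card_map, card_val, card_univ, Fintype.card_fin] at this
  obtain ⟨m, rfl⟩ := ht
  omega

end Median

section Chernoff

theorem exp_mul_indicator_one {α : Type*} {s : Set α} (c : ℝ) (x : α) :
    exp (c * s.indicator 1 x) = s.indicator (fun _ ↦ exp c - 1) x + 1 := by
  by_cases hx : x ∈ s <;> simp [hx]

variable {Ω α : Type*} [MeasurableSpace Ω] [MeasurableSpace α] {μ : Measure Ω}
  [IsProbabilityMeasure μ] {s : Set α}

theorem integrable_exp_mul_indicator_one_comp {X : Ω → α} (hX : Measurable X)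
    (hs : MeasurableSet s) (c : ℝ) :
    Integrable (fun ω ↦ exp (c * (s.indicator 1 ∘ X) ω)) μ := by
  simp only [Function.comp_apply, exp_mul_indicator_one]
  exact ((integrable_const _).indicator (hX hs)).add (integrable_const 1)

theorem mgf_indicator_one_comp {X : Ω → α} (hX : Measurable X) (hs : MeasurableSet s) (c : ℝ) :
    mgf (s.indicator 1 ∘ X) μ c = 1 + μ.real (X ⁻¹' s) * (exp c - 1) := by
  simp only [mgf, Function.comp_apply, exp_mul_indicator_one]
  rw [integral_add ((integrable_const _).indicator (hX hs)) (integrable_const 1)]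
  change ∫ ω, (X ⁻¹' s).indicator (fun _ ↦ exp c - 1) ω ∂μ + _ = _
  rw [integral_indicator_const _ (hX hs)]
  simp [add_comm]

theorem measureReal_card_mem_ge_le {ι : Type*} [Fintype ι] {X : ι → Ω → α}
    (hX : ∀ i, Measurable (X i)) (hindep : iIndepFun X μ) (hs : MeasurableSet s)
    [DecidablePred (· ∈ s)] {p c : ℝ} (hp : ∀ i, μ.real (X i ⁻¹' s) ≤ p) (hc : 0 ≤ c) (k : ℕ) :
    μ.real {ω | k ≤ #{i | X i ω ∈ s}} ≤ exp (-c * k) * (1 + p * (exp c - 1)) ^ Fintype.card ι := by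
  set Y : ι → Ω → ℝ := fun i ↦ s.indicator 1 ∘ X i
  have hY : ∀ i, Measurable (Y i) := fun i ↦ (measurable_one.indicator hs).comp (hX i)
  have hYindep : iIndepFun Y μ := hindep.comp _ fun _ ↦ measurable_one.indicator hs
  have hcount : ∀ ω, (#{i | X i ω ∈ s} : ℝ) = (∑ i, Y i) ω := fun ω ↦ by
    simp [Y, Set.indicator_apply]
  have hevent : {ω | k ≤ #{i | X i ω ∈ s}} = {ω | (k : ℝ) ≤ (∑ i, Y i) ω} := by
    ext ω
    simp only [Set.mem_ofPred_eq, ← hcount, Nat.cast_le]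
  have hmgf : mgf (∑ i, Y i) μ c ≤ (1 + p * (exp c - 1)) ^ Fintype.card ι := by
    rw [hYindep.mgf_sum hY, ← card_univ, ← prod_const]
    refine prod_le_prod (fun i _ ↦ mgf_nonneg) fun i _ ↦ ?_
    rw [mgf_indicator_one_comp (hX i) hs]
    gcongr
    · linarith [add_one_le_exp c]
    · exact hp i
  rw [hevent]
  calc _ ≤ exp (-c * k) * mgf (∑ i, Y i) μ c := measure_ge_le_exp_mul_mgf _ hc
          (hYindep.integrable_exp_mul_sum hY
            fun i _ ↦ integrable_exp_mul_indicator_one_comp (hX i) hs c)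
    _ ≤ _ := by gcongr

theorem measureReal_card_mem_ge_majority_le {ι : Type*} [Fintype ι] {X : ι → Ω → α}
    (hX : ∀ i, Measurable (X i)) (hindep : iIndepFun X μ) (hs : MeasurableSet s)
    [DecidablePred (· ∈ s)] {q : ℝ} (hq0 : 0 < q) (hq : q ≤ 1 / 2)
    (hp : ∀ i, μ.real (X i ⁻¹' s) ≤ q) {m : ℕ} (hcard : Fintype.card ι = 2 * m + 1) :
    μ.real {ω | m + 1 ≤ #{i | X i ω ∈ s}} ≤ 2 * q * (4 * q * (1 - q)) ^ m := by
  have hq1 : 0 < 1 - q := by linarith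
  have hexp : exp (log ((1 - q) / q)) = (1 - q) / q := exp_log (by positivity)
  have hc : 0 ≤ log ((1 - q) / q) := log_nonneg (by rw [le_div_iff₀ hq0]; linarith)
  refine (measureReal_card_mem_ge_le hX hindep hs hp hc (m + 1)).trans_eq ?_
  have hexp_mul : exp (-log ((1 - q) / q) * (m + 1 : ℕ)) = (q / (1 - q)) ^ (m + 1) := by
    rw [neg_mul, exp_neg, mul_comm, exp_nat_mul, hexp, ← inv_pow, inv_div]
  have hmgf : 1 + q * ((1 - q) / q - 1) = 2 * (1 - q) := by field_simp; ring
  have h2q : q / (1 - q) * (2 * (1 - q)) = 2 * q := by field_simp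
  rw [hexp_mul, hcard, hexp, hmgf]
  calc (q / (1 - q)) ^ (m + 1) * (2 * (1 - q)) ^ (2 * m + 1)
      = (q / (1 - q)) ^ (m + 1) * (2 * (1 - q)) ^ (m + 1) * (2 * (1 - q)) ^ m := by
        rw [mul_assoc, ← pow_add]
        ring_nf
    _ = 2 * q * (2 * q * (2 * (1 - q))) ^ m := by
        rw [← mul_pow, h2q, pow_succ', mul_assoc, ← mul_pow]
    _ = 2 * q * (4 * q * (1 - q)) ^ m := by ring_nf

end Chernoff

theorem succ_mul_pow_mul_sub_le {ρ σ : ℝ} (hρ : 0 ≤ ρ) (hρσ : ρ ≤ σ) (m : ℕ) :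
    (m + 1) * ρ ^ m * (σ - ρ) ≤ σ ^ (m + 1) := by
  induction m with
  | zero => simpa
  | succ m ih =>
    have hpow : ρ ^ (m + 1) ≤ σ ^ (m + 1) := by gcongr
    push_cast
    calc (m + 1 + 1) * ρ ^ (m + 1) * (σ - ρ)
        = ρ * ((m + 1) * ρ ^ m * (σ - ρ)) + ρ ^ (m + 1) * (σ - ρ) := by ring
      _ ≤ ρ * σ ^ (m + 1) + σ ^ (m + 1) * (σ - ρ) := by gcongr
      _ = σ ^ (m + 1 + 1) := by ring

theorem pow_le_div_sqrt_mul_pow {ρ r : ℝ} (hρ : 0 ≤ ρ) (hρr : ρ < r ^ 2) (m : ℕ) :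
    ρ ^ m ≤ r / (r ^ 2 - ρ) / √((2 * m + 1 : ℕ) : ℝ) * r ^ (2 * m + 1) := by
  have hgap : 0 < r ^ 2 - ρ := sub_pos.2 hρr
  have hsqrt : √((2 * m + 1 : ℕ) : ℝ) ≤ m + 1 :=
    Real.sqrt_le_iff.2 ⟨by positivity, by push_cast; nlinarith⟩
  rw [div_div, div_mul_eq_mul_div, le_div_iff₀ (by positivity)]
  calc ρ ^ m * ((r ^ 2 - ρ) * √((2 * m + 1 : ℕ) : ℝ))
      ≤ ρ ^ m * ((r ^ 2 - ρ) * (m + 1)) := by gcongr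
    _ ≤ (r ^ 2) ^ (m + 1) := by linarith [succ_mul_pow_mul_sub_le hρ hρr.le m]
    _ = r * r ^ (2 * m + 1) := by ring

theorem measureReal_errorEvent_le {Ω : Type*} [MeasurableSpace Ω] {μ : Measure Ω}
    [IsProbabilityMeasure μ] {X : ℕ → Ω → ℝ} (hX : ∀ i, Measurable (X i))
    (hindep : iIndepFun X μ) {a b q : ℝ} (hq0 : 0 < q) (hq : q ≤ 1 / 2)
    (ha : ∀ i, μ.real {ω | X i ω < a} ≤ q) (hb : ∀ i, μ.real {ω | b < X i ω} ≤ q) (m : ℕ) :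
    μ.real (errorEvent X a b (2 * m + 1)) ≤ 4 * q * (4 * q * (1 - q)) ^ m := by
  have hindep' : iIndepFun (fun i : Fin (2 * m + 1) ↦ X i) μ := hindep.precomp Fin.val_injective
  have hcard : Fintype.card (Fin (2 * m + 1)) = 2 * m + 1 := Fintype.card_fin _
  have hsub : errorEvent X a b (2 * m + 1) ⊆
      {ω | m + 1 ≤ #{i : Fin (2 * m + 1) | X i ω ∈ Set.Iio a}} ∪
        {ω | m + 1 ≤ #{i : Fin (2 * m + 1) | X i ω ∈ Set.Ioi b}} := by
    have hhalf : m + 1 = (2 * m + 1 + 1) / 2 := by omega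
    rintro ω (h | h)
    · exact Or.inl (hhalf.trans_le (half_le_card_lt_of_median_lt _ (by omega) h))
    · exact Or.inr (hhalf.trans_le (half_le_card_gt_of_lt_median _ (odd_two_mul_add_one m) h))
  calc _ ≤ _ := measureReal_mono hsub
    _ ≤ _ := measureReal_union_le _ _
    _ ≤ 2 * q * (4 * q * (1 - q)) ^ m + 2 * q * (4 * q * (1 - q)) ^ m := by
      gcongr
      · exact measureReal_card_mem_ge_majority_le (fun i : Fin (2 * m + 1) ↦ hX i) hindep'
          measurableSet_Iio hq0 hq (fun i ↦ ha i) hcard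
      · exact measureReal_card_mem_ge_majority_le (fun i : Fin (2 * m + 1) ↦ hX i) hindep'
          measurableSet_Ioi hq0 hq (fun i ↦ hb i) hcard
    _ = _ := by ring

theorem stmt_5_general {Ω : Type*} [MeasurableSpace Ω] (μ : Measure Ω) [IsProbabilityMeasure μ]
    (X : ℕ → Ω → ℝ) (hmeas : ∀ i, Measurable (X i))
    (hindep : iIndepFun X μ)
    (hident : ∀ i, Measure.map (X i) μ = Measure.map (X 0) μ)
    (a b : ℝ)
    (pL pU pmax : ℝ)
    (hpL : pL = (μ {ω | X 0 ω < a}).toReal)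
    (hpU : pU = (μ {ω | b < X 0 ω}).toReal)
    (hpmax : pmax = max pL pU)
    (hbound : pmax ≤ 0.169) :
    ∃ C : ℝ, 0 < C ∧ ∀ t : ℕ, Odd t → 0 < t →
      (μ (errorEvent X a b t)).toReal ≤ C / Real.sqrt t * 0.75 ^ t := by
  subst hpL hpU hpmax
  have hsame : ∀ i {s : Set ℝ}, MeasurableSet s → μ.real (X i ⁻¹' s) = μ.real (X 0 ⁻¹' s) :=
    fun i s hs ↦ by
      rw [← map_measureReal_apply (hmeas i) hs, hident, map_measureReal_apply (hmeas 0) hs]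
  have ha : ∀ i, μ.real {ω | X i ω < a} ≤ 0.169 := fun i ↦
    (hsame i measurableSet_Iio).trans_le ((le_max_left _ _).trans hbound)
  have hb : ∀ i, μ.real {ω | b < X i ω} ≤ 0.169 := fun i ↦
    (hsame i measurableSet_Ioi).trans_le ((le_max_right _ _).trans hbound)
  set ρ : ℝ := 4 * 0.169 * (1 - 0.169)
  refine ⟨4 * 0.169 * (0.75 / (0.75 ^ 2 - ρ)), by norm_num [ρ], ?_⟩
  rintro t ⟨m, rfl⟩ -
  calc μ.real (errorEvent X a b (2 * m + 1)) ≤ 4 * 0.169 * ρ ^ m :=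
        measureReal_errorEvent_le hmeas hindep (by norm_num) (by norm_num) ha hb m
    _ ≤ 4 * 0.169 * (0.75 / (0.75 ^ 2 - ρ) / √((2 * m + 1 : ℕ) : ℝ) * 0.75 ^ (2 * m + 1)) := by
        gcongr
        exact pow_le_div_sqrt_mul_pow (by norm_num [ρ]) (by norm_num [ρ]) m
    _ = _ := by ring

theorem stmt_5 {Ω : Type*} [MeasurableSpace Ω] (μ : Measure Ω) [IsProbabilityMeasure μ]
    (X : ℕ → Ω → ℝ) (hmeas : ∀ i, Measurable (X i))
    (hindep : iIndepFun X μ)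
    (hident : ∀ i, Measure.map (X i) μ = Measure.map (X 0) μ)
    (a b : ℝ) (hab : a ≤ b)
    (pL pU pmax : ℝ)
    (hpL : pL = (μ {ω | X 0 ω < a}).toReal)
    (hpU : pU = (μ {ω | b < X 0 ω}).toReal)
    (hpmax : pmax = max pL pU)
    (hbound : pmax ≤ 0.169) :
    ∃ C : ℝ, 0 < C ∧ ∀ t : ℕ, Odd t → 0 < t →
      (μ (errorEvent X a b t)).toReal ≤ C / Real.sqrt t * 0.75 ^ t :=
  stmt_5_general μ X hmeas hindep hident a b pL pU pmax hpL hpU hpmax hbound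
end

section
/- Let (X_i)_{i ∈ ℕ} be an i.i.d. sequence of real-valued random variables, let a ≤ b be reals, and set p_L = P(X_1 < a), p_U = P(X_1 > b) and p_max = max(p_L, p_U). If p_max ≤ 0.36, then there exists a constant C > 0 such that for every odd positive integer t, P(Error_t) ≤ C · t^{-1/2} · 0.96^t. -/
open MeasureTheory ProbabilityTheory

/-!
For `t = 2m + 1`, the median is below `a` only if at least `m + 1` of the `X i` are below `a`
(and symmetrically above `b`), so each half of `Error_t` has probability at most the binomial
tail `∑_{j > m} C(t, j) p^j (1-p)^(t-j)` with `p ≤ 0.36`. Comparing every term with the middle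
one gives the bound `C(2m+1, m+1) (p(1-p))^(m+1) / (1 - 2p)`; the central binomial estimate
`C(2m+1, m+1) ≤ 2^(2m+1) / √(2m+1)` supplies the factor `t^(-1/2)`, and
`4 p (1-p) ≤ 4 · 0.36 · 0.64 = 0.96²` the exponential rate.
-/

open Finset

theorem List.Pairwise.succ_le_countP_lt {α : Type*} [LinearOrder α] {l : List α}
    (hl : l.Pairwise (· ≤ ·)) {a : α} {i : ℕ} (hi : i < l.length) (h : l[i] < a) :
    i + 1 ≤ l.countP (fun y => y < a) := by
  have hall : ∀ y ∈ l.take (i + 1), y < a := by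
    intro y hy
    obtain ⟨j, hj, rfl⟩ := List.mem_take_iff_getElem.1 hy
    exact (hl.rel_get_of_le (a := ⟨j, by omega⟩) (b := ⟨i, hi⟩) (by simp; omega)).trans_lt h
  calc i + 1 = (l.take (i + 1)).countP (fun y => y < a) := by
        rw [List.countP_eq_length.2 (by simpa using hall), List.length_take]; omega
    _ ≤ l.countP (fun y => y < a) := (List.take_sublist _ _).countP_le

theorem List.Pairwise.length_sub_le_countP_gt {α : Type*} [LinearOrder α] {l : List α}
    (hl : l.Pairwise (· ≤ ·)) {b : α} {i : ℕ} (hi : i < l.length) (h : b < l[i]) :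
    l.length - i ≤ l.countP (fun y => b < y) := by
  have hall : ∀ y ∈ l.drop i, b < y := by
    intro y hy
    obtain ⟨j, hj, rfl⟩ := List.mem_drop_iff_getElem.1 hy
    exact h.trans_le (hl.rel_get_of_le (a := ⟨i, hi⟩) (b := ⟨i + j, by omega⟩) (by simp))
  calc l.length - i = (l.drop i).countP (fun y => b < y) := by
        rw [List.countP_eq_length.2 (by simpa using hall), List.length_drop]
    _ ≤ l.countP (fun y => b < y) := (List.drop_sublist _ _).countP_le

theorem Multiset.countP_sort_map_univ {ι α : Type*} [Fintype ι] [LinearOrder α] (x : ι → α)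
    (P : α → Prop) [DecidablePred P] :
    ((univ.val.map x).sort (· ≤ ·)).countP (fun y => P y) = #{i | P (x i)} := by
  rw [← Multiset.coe_countP, Multiset.sort_eq, Multiset.countP_map, card_filter]
  simp [Finset.card]

theorem median_odd_eq (m : ℕ) (x : Fin (2 * m + 1) → ℝ) :
    median (2 * m + 1) x = ((univ.val.map x).sort (· ≤ ·))[m]'(by simp; omega) := by
  rw [median, show (2 * m + 1 + 1) / 2 - 1 = m by omega, List.getD_eq_getElem]

theorem succ_le_card_filter_lt_of_median_lt {m : ℕ} {x : Fin (2 * m + 1) → ℝ} {a : ℝ}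
    (h : median (2 * m + 1) x < a) : m + 1 ≤ #{i | x i < a} := by
  rw [median_odd_eq] at h
  have := (Multiset.pairwise_sort _ _).succ_le_countP_lt _ h
  rwa [Multiset.countP_sort_map_univ] at this

theorem succ_le_card_filter_gt_of_lt_median {m : ℕ} {x : Fin (2 * m + 1) → ℝ} {b : ℝ}
    (h : b < median (2 * m + 1) x) : m + 1 ≤ #{i | b < x i} := by
  rw [median_odd_eq] at h
  have := (Multiset.pairwise_sort _ _).length_sub_le_countP_gt _ h
  rw [Multiset.countP_sort_map_univ, Multiset.length_sort, Multiset.card_map, card_val,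
    card_univ, Fintype.card_fin] at this
  omega

theorem Nat.centralBinom_sq_mul_le (n : ℕ) : n.centralBinom ^ 2 * (3 * n + 1) ≤ 16 ^ n := by
  induction n with
  | zero => simp
  | succ n ih =>
    have h := Nat.succ_mul_centralBinom_succ n
    have key : (n + 1) ^ 2 * ((n + 1).centralBinom ^ 2 * (3 * (n + 1) + 1))
        ≤ (n + 1) ^ 2 * 16 ^ (n + 1) :=
      calc (n + 1) ^ 2 * ((n + 1).centralBinom ^ 2 * (3 * (n + 1) + 1))
          = ((n + 1) * (n + 1).centralBinom) ^ 2 * (3 * n + 4) := by ring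
        _ = (2 * (2 * n + 1) * n.centralBinom) ^ 2 * (3 * n + 4) := by rw [h]
        _ ≤ 16 * (n + 1) ^ 2 * (n.centralBinom ^ 2 * (3 * n + 1)) := by
            nlinarith [Nat.zero_le (n.centralBinom ^ 2 * n)]
        _ ≤ 16 * (n + 1) ^ 2 * 16 ^ n := by gcongr
        _ = (n + 1) ^ 2 * 16 ^ (n + 1) := by ring
    exact Nat.le_of_mul_le_mul_left key (by positivity)

theorem Nat.choose_succ_middle_le_two_mul_centralBinom (m : ℕ) :
    (2 * m + 1).choose (m + 1) ≤ 2 * m.centralBinom := by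
  have h := Nat.choose_le_middle (m + 1) (2 * m)
  rw [show 2 * m / 2 = m by omega] at h
  rw [Nat.choose_succ_succ', Nat.centralBinom]
  omega

theorem Nat.choose_le_choose_succ_middle (m j : ℕ) :
    (2 * m + 1).choose j ≤ (2 * m + 1).choose (m + 1) := by
  have h := Nat.choose_le_middle j (2 * m + 1)
  rwa [show (2 * m + 1) / 2 = m by omega, ← Nat.choose_symm_half] at h

theorem Nat.choose_succ_middle_sq_mul_le (m : ℕ) :
    (2 * m + 1).choose (m + 1) ^ 2 * (2 * m + 1) ≤ 4 ^ (2 * m + 1) := by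
  calc (2 * m + 1).choose (m + 1) ^ 2 * (2 * m + 1)
      ≤ (2 * m.centralBinom) ^ 2 * (3 * m + 1) := by
        gcongr
        · exact Nat.choose_succ_middle_le_two_mul_centralBinom m
        · omega
    _ = 4 * (m.centralBinom ^ 2 * (3 * m + 1)) := by ring
    _ ≤ 4 * 16 ^ m := by gcongr; exact Nat.centralBinom_sq_mul_le m
    _ = 4 ^ (2 * m + 1) := by rw [pow_succ, pow_mul]; ring

theorem choose_succ_middle_mul_sqrt_le (m : ℕ) :
    (2 * m + 1).choose (m + 1) * √(2 * m + 1) ≤ (2 : ℝ) ^ (2 * m + 1) := by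
  rw [← pow_le_pow_iff_left₀ (by positivity) (by positivity) two_ne_zero, mul_pow,
    Real.sq_sqrt (by positivity), ← pow_mul, mul_comm _ 2, pow_mul]
  exact_mod_cast Nat.choose_succ_middle_sq_mul_le m

noncomputable def binomialTail (n k : ℕ) (p : ℝ) : ℝ :=
  ∑ j ∈ Icc k n, n.choose j * p ^ j * (1 - p) ^ (n - j)

theorem binomialTail_majority_le (m : ℕ) {p : ℝ} (hp0 : 0 ≤ p) (hp : p < 1 / 2) :
    binomialTail (2 * m + 1) (m + 1) p
      ≤ (2 * m + 1).choose (m + 1) * (p * (1 - p)) ^ (m + 1) / (1 - 2 * p) := by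
  set q := 1 - p
  have hq : 0 < q := by linarith
  have hr0 : 0 ≤ p / q := by positivity
  have hr1 : p / q < 1 := by rw [div_lt_one hq]; linarith
  calc binomialTail (2 * m + 1) (m + 1) p
      ≤ ∑ j ∈ Icc (m + 1) (2 * m + 1),
          (2 * m + 1).choose (m + 1) * q ^ (2 * m + 1) * (p / q) ^ j := by
        refine sum_le_sum fun j hj => ?_
        have hj : j ≤ 2 * m + 1 := (mem_Icc.1 hj).2
        have : p ^ j * q ^ (2 * m + 1 - j) = q ^ (2 * m + 1) * (p / q) ^ j := by
          rw [div_pow, ← Nat.sub_add_cancel hj, pow_add]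
          field_simp
          rw [Nat.add_sub_cancel]
        rw [mul_assoc, this, ← mul_assoc]
        gcongr
        exact_mod_cast Nat.choose_le_choose_succ_middle m j
    _ = (2 * m + 1).choose (m + 1) * q ^ (2 * m + 1) *
          ∑ j ∈ Ico (m + 1) (2 * m + 1 + 1), (p / q) ^ j := by
        rw [← mul_sum, ← Ico_add_one_right_eq_Icc]
    _ ≤ (2 * m + 1).choose (m + 1) * q ^ (2 * m + 1) * ((p / q) ^ (m + 1) / (1 - p / q)) := by
        gcongr
        exact geom_sum_Ico_le_of_lt_one hr0 hr1
    _ = (2 * m + 1).choose (m + 1) * (p * q) ^ (m + 1) / (1 - 2 * p) := by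
        have h2p : 1 - 2 * p ≠ 0 := by linarith
        have : 1 - p / q = (1 - 2 * p) / q := by field_simp; ring
        rw [this, div_pow, mul_pow]
        field_simp
        ring

theorem binomialTail_majority_le_of_le (m : ℕ) {p : ℝ} (hp0 : 0 ≤ p) (hp : p ≤ 0.36) :
    binomialTail (2 * m + 1) (m + 1) p ≤ 2 / √(2 * m + 1) * 0.96 ^ (2 * m + 1) := by
  have hs : 0 < √(2 * m + 1 : ℝ) := by positivity
  have hC : ((2 * m + 1).choose (m + 1) : ℝ) ≤ 2 ^ (2 * m + 1) / √(2 * m + 1) := by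
    rw [le_div_iff₀ hs]; exact choose_succ_middle_mul_sqrt_le m
  have hpq0 : 0 ≤ p * (1 - p) := by nlinarith
  have hpq : p * (1 - p) ≤ 0.2304 := by nlinarith
  calc binomialTail (2 * m + 1) (m + 1) p
      ≤ (2 * m + 1).choose (m + 1) * (p * (1 - p)) ^ (m + 1) / (1 - 2 * p) :=
        binomialTail_majority_le m hp0 (by linarith)
    _ ≤ 2 ^ (2 * m + 1) / √(2 * m + 1) * 0.2304 ^ (m + 1) / 0.28 := by
        gcongr
        linarith
    _ = 2 * 0.2304 / 0.28 / √(2 * m + 1) * 0.9216 ^ m := by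
        rw [pow_succ, pow_succ, pow_mul, show (0.9216 : ℝ) = 2 ^ 2 * 0.2304 by norm_num, mul_pow]
        ring
    _ ≤ 2 * 0.96 / √(2 * m + 1) * 0.9216 ^ m := by gcongr; norm_num
    _ = 2 / √(2 * m + 1) * 0.96 ^ (2 * m + 1) := by
        rw [pow_succ, pow_mul]; norm_num; ring

section IndependentTrials

variable {Ω ι β : Type*} [MeasurableSpace Ω] [MeasurableSpace β] [Fintype ι] [DecidableEq ι]
  {μ : Measure Ω} [IsProbabilityMeasure μ] {Y : ι → Ω → β} {A : Set β} {p : ℝ}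

theorem ProbabilityTheory.iIndepFun.measureReal_iInter_preimage_ite (hY : iIndepFun Y μ)
    (hmeas : ∀ i, Measurable (Y i)) (hA : MeasurableSet A)
    (hp : ∀ i, μ.real (Y i ⁻¹' A) = p) (S : Finset ι) :
    μ.real (⋂ i, Y i ⁻¹' (if i ∈ S then A else Aᶜ))
      = p ^ #S * (1 - p) ^ (Fintype.card ι - #S) := by
  have hfactor : ∀ i,
      μ.real (Y i ⁻¹' (if i ∈ S then A else Aᶜ)) = if i ∈ S then p else 1 - p := by
    intro i
    split_ifs
    · exact hp i
    · rw [Set.preimage_compl, probReal_compl_eq_one_sub (hmeas i hA), hp i]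
  rw [measureReal_def, hY.meas_iInter fun i => ⟨_, by split_ifs; exacts [hA, hA.compl], rfl⟩,
    ENNReal.toReal_prod]
  simp_rw [← measureReal_def, hfactor]
  rw [prod_ite, prod_const, prod_const, filter_mem_eq_inter, univ_inter, filter_notMem_eq_sdiff,
    ← compl_eq_univ_sdiff, card_compl]

theorem ProbabilityTheory.iIndepFun.measureReal_le_card_filter_le (hY : iIndepFun Y μ)
    (hmeas : ∀ i, Measurable (Y i)) (hA : MeasurableSet A)
    (hp : ∀ i, μ.real (Y i ⁻¹' A) = p) (k : ℕ) [∀ i ω, Decidable (Y i ω ∈ A)] :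
    μ.real {ω | k ≤ #{i | Y i ω ∈ A}} ≤ binomialTail (Fintype.card ι) k p := by
  have hcover : {ω | k ≤ #{i | Y i ω ∈ A}}
      ⊆ ⋃ S ∈ (univ : Finset (Finset ι)).filter (k ≤ #·),
          ⋂ i, Y i ⁻¹' (if i ∈ S then A else Aᶜ) := by
    intro ω hω
    refine Set.mem_iUnion₂.2 ⟨({i | Y i ω ∈ A} : Finset ι), by simpa using hω,
      Set.mem_iInter.2 fun i => ?_⟩
    by_cases h : Y i ω ∈ A <;> simp [h]
  calc μ.real {ω | k ≤ #{i | Y i ω ∈ A}}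
      ≤ ∑ S ∈ (univ : Finset (Finset ι)).filter (k ≤ #·),
          μ.real (⋂ i, Y i ⁻¹' (if i ∈ S then A else Aᶜ)) :=
        (measureReal_mono hcover (measure_ne_top _ _)).trans (measureReal_biUnion_finset_le _ _)
    _ = ∑ S ∈ (univ : Finset ι).powerset,
          if k ≤ #S then p ^ #S * (1 - p) ^ (Fintype.card ι - #S) else 0 := by
        rw [sum_filter, powerset_univ]
        refine sum_congr rfl fun S _ => ?_
        rw [hY.measureReal_iInter_preimage_ite hmeas hA hp]
    _ = binomialTail (Fintype.card ι) k p := by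
        rw [sum_powerset_apply_card
          (fun j => if k ≤ j then p ^ j * (1 - p) ^ (Fintype.card ι - j) else 0),
          card_univ, binomialTail]
        simp_rw [nsmul_eq_mul, mul_ite, mul_zero, ← sum_filter, mul_assoc]
        congr 1
        ext j
        simp only [mem_filter, mem_range, mem_Icc]
        omega

end IndependentTrials

open Classical in
theorem measureReal_majority_le {Ω : Type*} [MeasurableSpace Ω] {μ : Measure Ω}
    [IsProbabilityMeasure μ] {X : ℕ → Ω → ℝ} (hmeas : ∀ i, Measurable (X i))
    (hindep : iIndepFun X μ) (hident : ∀ i, Measure.map (X i) μ = Measure.map (X 0) μ)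
    {A : Set ℝ} (hA : MeasurableSet A) (hp : μ.real (X 0 ⁻¹' A) ≤ 0.36) (m : ℕ) :
    μ.real {ω | m + 1 ≤ #{i : Fin (2 * m + 1) | X i ω ∈ A}}
      ≤ 2 / √(2 * m + 1) * 0.96 ^ (2 * m + 1) := by
  have hsame : ∀ i : Fin (2 * m + 1), μ.real (X i ⁻¹' A) = μ.real (X 0 ⁻¹' A) := by
    intro i
    simp only [measureReal_def, ← Measure.map_apply (hmeas _) hA, hident]
  calc μ.real {ω | m + 1 ≤ #{i : Fin (2 * m + 1) | X i ω ∈ A}}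
      ≤ binomialTail (Fintype.card (Fin (2 * m + 1))) (m + 1) (μ.real (X 0 ⁻¹' A)) :=
        (hindep.precomp Fin.val_injective).measureReal_le_card_filter_le (fun i => hmeas i) hA
          hsame (m + 1)
    _ ≤ 2 / √(2 * m + 1) * 0.96 ^ (2 * m + 1) := by
        rw [Fintype.card_fin]
        exact binomialTail_majority_le_of_le m measureReal_nonneg hp

theorem errorEvent_subset {Ω : Type*} (X : ℕ → Ω → ℝ) (a b : ℝ) (m : ℕ) :
    errorEvent X a b (2 * m + 1) ⊆ {ω | m + 1 ≤ #{i : Fin (2 * m + 1) | X i ω ∈ Set.Iio a}}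
      ∪ {ω | m + 1 ≤ #{i : Fin (2 * m + 1) | X i ω ∈ Set.Ioi b}} := by
  rintro ω (h | h)
  · exact Or.inl (by simpa using succ_le_card_filter_lt_of_median_lt h)
  · exact Or.inr (by simpa using succ_le_card_filter_gt_of_lt_median h)


theorem stmt_6_general {Ω : Type*} [MeasurableSpace Ω] (μ : Measure Ω) [IsProbabilityMeasure μ]
    (X : ℕ → Ω → ℝ) (hmeas : ∀ i, Measurable (X i))
    (hindep : iIndepFun X μ)
    (hident : ∀ i, Measure.map (X i) μ = Measure.map (X 0) μ)
    (a b : ℝ)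
    (pL pU pmax : ℝ)
    (hpL : pL = (μ {ω | X 0 ω < a}).toReal)
    (hpU : pU = (μ {ω | b < X 0 ω}).toReal)
    (hpmax : pmax = max pL pU)
    (hbound : pmax ≤ 0.36) :
    ∃ C : ℝ, 0 < C ∧ ∀ t : ℕ, Odd t → 0 < t →
      (μ (errorEvent X a b t)).toReal ≤ C / Real.sqrt t * 0.96 ^ t := by
  refine ⟨4, by norm_num, ?_⟩
  rintro t ⟨m, rfl⟩ -
  subst hpL hpU hpmax
  have hL : μ.real (X 0 ⁻¹' Set.Iio a) ≤ 0.36 := (le_max_left _ _).trans hbound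
  have hU : μ.real (X 0 ⁻¹' Set.Ioi b) ≤ 0.36 := (le_max_right _ _).trans hbound
  calc μ.real (errorEvent X a b (2 * m + 1))
      ≤ 2 / √(2 * m + 1) * 0.96 ^ (2 * m + 1) + 2 / √(2 * m + 1) * 0.96 ^ (2 * m + 1) :=
        (measureReal_mono (errorEvent_subset X a b m)).trans <| (measureReal_union_le _ _).trans <|
          add_le_add (measureReal_majority_le hmeas hindep hident measurableSet_Iio hL m)
            (measureReal_majority_le hmeas hindep hident measurableSet_Ioi hU m)
    _ = 4 / √((2 * m + 1 : ℕ) : ℝ) * 0.96 ^ (2 * m + 1) := by push_cast; ring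

theorem stmt_6 {Ω : Type*} [MeasurableSpace Ω] (μ : Measure Ω) [IsProbabilityMeasure μ]
    (X : ℕ → Ω → ℝ) (hmeas : ∀ i, Measurable (X i))
    (hindep : iIndepFun X μ)
    (hident : ∀ i, Measure.map (X i) μ = Measure.map (X 0) μ)
    (a b : ℝ) (hab : a ≤ b)
    (pL pU pmax : ℝ)
    (hpL : pL = (μ {ω | X 0 ω < a}).toReal)
    (hpU : pU = (μ {ω | b < X 0 ω}).toReal)
    (hpmax : pmax = max pL pU)
    (hbound : pmax ≤ 0.36) :
    ∃ C : ℝ, 0 < C ∧ ∀ t : ℕ, Odd t → 0 < t →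
      (μ (errorEvent X a b t)).toReal ≤ C / Real.sqrt t * 0.96 ^ t :=
  stmt_6_general μ X hmeas hindep hident a b pL pU pmax hpL hpU hpmax hbound
end

section
/- Let t ≥ 3 be an odd integer, let X_1, …, X_t be i.i.d. real-valued random variables, and let a ≤ b be reals. Set p_L = P(X_1 < a) and p_U = P(X_1 > b). If p_L > 0, p_U > 0, and P(a ≤ X_1 ≤ b) > 0, then the probability that the median of X_1, …, X_t is < a or > b is strictly less than η(t, ⌈t/2⌉, p_L + p_U). -/
open MeasureTheory ProbabilityTheory

/-- `eta t m p = Σ_{k=m}^{t} (t choose k) · p^k · (1-p)^{t-k}`. -/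
noncomputable def eta (t m : ℕ) (p : ℝ) : ℝ :=
  ∑ k ∈ Finset.Icc m t, (t.choose k : ℝ) * p ^ k * (1 - p) ^ (t - k)

lemma sorted_le_getElem {l : List ℝ} (hl : l.Pairwise (· ≤ ·)) {i j : ℕ}
    (hij : i ≤ j) (hj : j < l.length) : l[i]'(lt_of_le_of_lt hij hj) ≤ l[j] := by
  rcases eq_or_lt_of_le hij with rfl | hlt
  · rfl
  · exact List.pairwise_iff_getElem.mp hl _ _ _ hj hlt

lemma sorted_lt_iff {l : List ℝ} (hl : l.Pairwise (· ≤ ·)) {k : ℕ} (hk : k < l.length) (a : ℝ) :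
    l[k] < a ↔ k + 1 ≤ l.countP (fun y => decide (y < a)) := by
  constructor
  · intro h
    have hc : l.countP (fun y => decide (y < a)) =
        (l.take (k+1)).countP (fun y => decide (y < a)) +
        (l.drop (k+1)).countP (fun y => decide (y < a)) := by
      conv_lhs => rw [← List.take_append_drop (k+1) l]
      rw [List.countP_append]
    have htake : (l.take (k+1)).countP (fun y => decide (y < a)) = (l.take (k+1)).length := by
      rw [List.countP_eq_length]
      intro x hx
      obtain ⟨j, hj, rfl⟩ := List.mem_take_iff_getElem.mp hx
      have hj' : j ≤ k := by
        have := lt_min_iff.mp hj; omega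
      simp only [decide_eq_true_eq]
      exact lt_of_le_of_lt (sorted_le_getElem hl hj' hk) h
    have hlen : (l.take (k+1)).length = k + 1 := by
      rw [List.length_take]; omega
    omega
  · intro h
    by_contra hcon
    push_neg at hcon
    have hc : l.countP (fun y => decide (y < a)) =
        (l.take k).countP (fun y => decide (y < a)) +
        (l.drop k).countP (fun y => decide (y < a)) := by
      conv_lhs => rw [← List.take_append_drop k l]
      rw [List.countP_append]
    have hdrop : (l.drop k).countP (fun y => decide (y < a)) = 0 := by
      rw [List.countP_eq_zero]
      intro x hx
      obtain ⟨j, hj, rfl⟩ := List.getElem_of_mem hx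
      rw [List.getElem_drop] at *
      simp only [decide_eq_true_eq, not_lt]
      refine le_trans hcon (sorted_le_getElem hl (Nat.le_add_right k j) ?_)
      rw [List.length_drop] at hj; omega
    have := List.countP_le_length (l := l.take k) (p := fun y => decide (y < a))
    rw [List.length_take] at this
    omega

lemma sorted_gt_iff {l : List ℝ} (hl : l.Pairwise (· ≤ ·)) {k : ℕ} (hk : k < l.length) (b : ℝ) :
    b < l[k] ↔ l.length - k ≤ l.countP (fun y => decide (b < y)) := by
  constructor
  · intro h
    have hc : l.countP (fun y => decide (b < y)) =
        (l.take k).countP (fun y => decide (b < y)) +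
        (l.drop k).countP (fun y => decide (b < y)) := by
      conv_lhs => rw [← List.take_append_drop k l]
      rw [List.countP_append]
    have hdrop : (l.drop k).countP (fun y => decide (b < y)) = (l.drop k).length := by
      rw [List.countP_eq_length]
      intro x hx
      obtain ⟨j, hj, rfl⟩ := List.getElem_of_mem hx
      rw [List.getElem_drop] at *
      simp only [decide_eq_true_eq]
      refine lt_of_lt_of_le h (sorted_le_getElem hl (Nat.le_add_right k j) ?_)
      rw [List.length_drop] at hj; omega
    rw [List.length_drop] at hdrop
    omega
  · intro h
    by_contra hcon
    push_neg at hcon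
    have hc : l.countP (fun y => decide (b < y)) =
        (l.take (k+1)).countP (fun y => decide (b < y)) +
        (l.drop (k+1)).countP (fun y => decide (b < y)) := by
      conv_lhs => rw [← List.take_append_drop (k+1) l]
      rw [List.countP_append]
    have htake : (l.take (k+1)).countP (fun y => decide (b < y)) = 0 := by
      rw [List.countP_eq_zero]
      intro x hx
      obtain ⟨j, hj, rfl⟩ := List.mem_take_iff_getElem.mp hx
      have hj' : j ≤ k := by
        have := lt_min_iff.mp hj; omega
      simp only [decide_eq_true_eq, not_lt]
      exact le_trans (sorted_le_getElem hl hj' hk) hcon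
    have := List.countP_le_length (l := l.drop (k+1)) (p := fun y => decide (b < y))
    rw [List.length_drop] at this
    omega




lemma countP_sort_eq_card_filter {t : ℕ} (x : Fin t → ℝ) (p : ℝ → Prop) [DecidablePred p] :
    ((Finset.univ.val.map x).sort (· ≤ ·)).countP (fun y => decide (p y)) =
      (Finset.univ.filter (fun i => p (x i))).card := by
  have h1 : ((Finset.univ.val.map x).sort (· ≤ ·)).countP (fun y => decide (p y)) =
      Multiset.countP p (Finset.univ.val.map x) := by
    rw [← Multiset.coe_countP, Multiset.sort_eq]
  rw [h1, Multiset.countP_map]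
  rfl

lemma length_sort_eq {t : ℕ} (x : Fin t → ℝ) :
    ((Finset.univ.val.map x).sort (· ≤ ·)).length = t := by
  rw [Multiset.length_sort, Multiset.card_map]
  simp

lemma median_lt_iff {t : ℕ} (ht : 0 < t) (x : Fin t → ℝ) (a : ℝ) :
    median t x < a ↔ (t + 1) / 2 ≤ (Finset.univ.filter (fun i => x i < a)).card := by
  set l := (Finset.univ.val.map x).sort (· ≤ ·) with hl
  have hlen : l.length = t := length_sort_eq x
  have hsort : l.Pairwise (· ≤ ·) := Multiset.pairwise_sort _ _
  have hk : (t + 1) / 2 - 1 < l.length := by omega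
  have hmed : median t x = l[(t + 1) / 2 - 1] := List.getD_eq_getElem l 0 hk
  rw [hmed, sorted_lt_iff hsort hk, countP_sort_eq_card_filter x (fun y => y < a)]
  have : (t + 1) / 2 - 1 + 1 = (t + 1) / 2 := by omega
  rw [this]

lemma median_gt_iff {t : ℕ} (ht : Odd t) (ht0 : 0 < t) (x : Fin t → ℝ) (b : ℝ) :
    b < median t x ↔ (t + 1) / 2 ≤ (Finset.univ.filter (fun i => b < x i)).card := by
  set l := (Finset.univ.val.map x).sort (· ≤ ·) with hl
  have hlen : l.length = t := length_sort_eq x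
  have hsort : l.Pairwise (· ≤ ·) := Multiset.pairwise_sort _ _
  have hk : (t + 1) / 2 - 1 < l.length := by omega
  have hmed : median t x = l[(t + 1) / 2 - 1] := List.getD_eq_getElem l 0 hk
  rw [hmed, sorted_gt_iff hsort hk, countP_sort_eq_card_filter x (fun y => b < y), hlen]
  obtain ⟨r, rfl⟩ := ht
  have : 2 * r + 1 - ((2 * r + 1 + 1) / 2 - 1) = (2 * r + 1 + 1) / 2 := by omega
  rw [this]


lemma card_filter_val_lt {t m : ℕ} (hm : m ≤ t) :
    (Finset.univ.filter (fun i : Fin t => (i : ℕ) < m)).card = m := by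
  have himg : (Finset.univ.filter (fun i : Fin t => (i : ℕ) < m)).image Fin.val
      = Finset.range m := by
    ext j
    simp only [Finset.mem_image, Finset.mem_filter, Finset.mem_univ, true_and, Finset.mem_range]
    constructor
    · rintro ⟨i, hi, rfl⟩; exact hi
    · intro hj; exact ⟨⟨j, lt_of_lt_of_le hj hm⟩, hj, rfl⟩
  have h2 := Finset.card_image_of_injective
    (Finset.univ.filter (fun i : Fin t => (i : ℕ) < m)) Fin.val_injective
  rw [himg, Finset.card_range] at h2
  exact h2.symm

theorem stmt_7 {Ω : Type*} [MeasurableSpace Ω] (μ : Measure Ω) [IsProbabilityMeasure μ]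
    (t : ℕ) (ht : Odd t) (ht3 : 3 ≤ t)
    (X : Fin t → Ω → ℝ) (hmeas : ∀ i, Measurable (X i))
    (hindep : iIndepFun X μ)
    (hpos : 0 < t)
    (hident : ∀ i, Measure.map (X i) μ = Measure.map (X ⟨0, hpos⟩) μ)
    (a b : ℝ) (hab : a ≤ b)
    (pL pU : ℝ)
    (hpL : pL = (μ {ω | X ⟨0, hpos⟩ ω < a}).toReal)
    (hpU : pU = (μ {ω | b < X ⟨0, hpos⟩ ω}).toReal)
    (hpL0 : 0 < pL) (hpU0 : 0 < pU)
    (hmid : 0 < (μ {ω | a ≤ X ⟨0, hpos⟩ ω ∧ X ⟨0, hpos⟩ ω ≤ b}).toReal) :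
    (μ {ω | median t (fun i => X i ω) < a ∨ b < median t (fun i => X i ω)}).toReal <
      eta t ((t + 1) / 2) (pL + pU) := by
  set i0 : Fin t := ⟨0, hpos⟩ with hi0
  set m : ℕ := (t + 1) / 2 with hm
  have hm2 : 2 ≤ m := by omega
  have hmt : m ≤ t := by omega
  set O : Set ℝ := Set.Iio a ∪ Set.Ioi b with hO
  set I : Set ℝ := Set.Icc a b with hI
  have hOmeas : MeasurableSet O := (measurableSet_Iio).union (measurableSet_Ioi)
  have hImeas : MeasurableSet I := measurableSet_Icc
  have hIO : I = Oᶜ := by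
    ext y
    simp only [hI, hO, Set.mem_Icc, Set.mem_compl_iff, Set.mem_union, Set.mem_Iio, Set.mem_Ioi]
    constructor
    · rintro ⟨h1, h2⟩ (h | h) <;> linarith
    · intro h; push_neg at h; exact ⟨h.1, h.2⟩
  -- identical distribution of preimages
  have hid : ∀ (i : Fin t) (B : Set ℝ), MeasurableSet B →
      μ ((X i) ⁻¹' B) = μ ((X i0) ⁻¹' B) := by
    intro i B hB
    rw [← Measure.map_apply (hmeas i) hB, ← Measure.map_apply (hmeas i0) hB, hident i]
  -- product formula for cells
  have hcell : ∀ B : Fin t → Set ℝ, (∀ i, MeasurableSet (B i)) →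
      μ (⋂ i, (X i) ⁻¹' (B i)) = ∏ i : Fin t, μ ((X i0) ⁻¹' (B i)) := by
    intro B hB
    have h1 : (⋂ i, (X i) ⁻¹' (B i)) = ⋂ i ∈ Finset.univ, (X i) ⁻¹' (B i) := by
      simp
    rw [h1, (iIndepFun_iff_measure_inter_preimage_eq_mul.mp hindep) Finset.univ
      (fun i _ => hB i)]
    exact Finset.prod_congr rfl fun i _ => hid i (B i) (hB i)
  -- basic probabilities
  set PO : ENNReal := μ ((X i0) ⁻¹' O) with hPO
  set PI : ENNReal := μ ((X i0) ⁻¹' I) with hPI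
  have hpreO : (X i0) ⁻¹' O = {ω | X i0 ω < a} ∪ {ω | b < X i0 ω} := by
    ext ω; simp [hO, Set.mem_union]
  have hdisjLU : Disjoint {ω | X i0 ω < a} {ω | b < X i0 ω} := by
    rw [Set.disjoint_left]
    intro ω h1 h2
    simp only [Set.mem_setOf_eq] at h1 h2
    linarith
  have hPOreal : PO.toReal = pL + pU := by
    rw [hPO, hpreO, measure_union hdisjLU (hmeas i0 measurableSet_Ioi),
      ENNReal.toReal_add (measure_ne_top _ _) (measure_ne_top _ _), hpL, hpU]
  have hpreI : (X i0) ⁻¹' I = {ω | a ≤ X i0 ω ∧ X i0 ω ≤ b} := by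
    ext ω; simp [hI, Set.mem_Icc]
  have hmid' : μ {ω | a ≤ X i0 ω ∧ X i0 ω ≤ b} ≠ 0 := by
    intro h
    rw [h] at hmid
    simp at hmid
  have hPIne : PI ≠ 0 := by rw [hPI, hpreI]; exact hmid'
  have hPOI : PO + PI = 1 := by
    rw [hPO, hPI, hIO, Set.preimage_compl,
      measure_add_measure_compl (hmeas i0 hOmeas), measure_univ]
  have hPIreal : PI.toReal = 1 - (pL + pU) := by
    have := congrArg ENNReal.toReal hPOI
    rw [ENNReal.toReal_add (measure_ne_top _ _) (measure_ne_top _ _), ENNReal.toReal_one,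
      hPOreal] at this
    linarith
  classical
  set C : Finset (Fin t) → Set Ω :=
    fun S => ⋂ i, (X i) ⁻¹' (if i ∈ S then O else I) with hC
  have hCmeas : ∀ S, MeasurableSet (C S) := by
    intro S
    refine MeasurableSet.iInter fun i => (hmeas i) ?_
    by_cases h : i ∈ S <;> simp [h, hOmeas, hImeas]
  have hCmu : ∀ S : Finset (Fin t), μ (C S) = PO ^ S.card * PI ^ (t - S.card) := by
    intro S
    rw [hC]
    rw [hcell _ (fun i => by by_cases h : i ∈ S <;> simp [h, hOmeas, hImeas])]
    have hif : ∀ i : Fin t, μ ((X i0) ⁻¹' (if i ∈ S then O else I))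
        = (if i ∈ S then PO else PI) := by
      intro i; by_cases h : i ∈ S <;> simp [h, hPO, hPI]
    rw [Finset.prod_congr rfl (fun i _ => hif i), Finset.prod_ite, Finset.prod_const,
      Finset.prod_const, Finset.filter_univ_mem]
    congr 1
    have : Finset.univ.filter (fun i => ¬ i ∈ S) = Sᶜ := by
      ext i; simp
    rw [this, Finset.card_compl, Fintype.card_fin]
  have hCmem : ∀ (S : Finset (Fin t)) (ω : Ω), ω ∈ C S → ∀ i, (i ∈ S ↔ X i ω ∈ O) := by
    intro S ω hω i
    have h := Set.mem_iInter.mp hω i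
    by_cases hiS : i ∈ S
    · simp only [hiS, if_true] at h
      exact ⟨fun _ => h, fun _ => hiS⟩
    · simp only [hiS, if_false] at h
      rw [hIO] at h
      exact ⟨fun h' => absurd h' hiS, fun h' => absurd h' h⟩
  set Sfun : Ω → Finset (Fin t) := fun ω => Finset.univ.filter (fun i => X i ω ∈ O) with hSfun
  have hωmem : ∀ ω, ω ∈ C (Sfun ω) := by
    intro ω
    rw [hC]
    refine Set.mem_iInter.mpr fun i => ?_
    by_cases h : X i ω ∈ O
    · simp [hSfun, h]
    · simp only [hSfun, Finset.mem_filter, Finset.mem_univ, true_and, h, if_false]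
      rw [Set.mem_preimage, hIO]
      exact h
  set F : Finset (Finset (Fin t)) :=
    Finset.univ.filter (fun S : Finset (Fin t) => m ≤ S.card) with hF
  set A : Set Ω := ⋃ S ∈ F, C S with hA
  have hmuA : μ A = ∑ S ∈ F, μ (C S) := by
    rw [hA]
    refine measure_biUnion_finset ?_ (fun S _ => hCmeas S)
    intro S hS T hT hST
    refine Set.disjoint_left.mpr fun ω hωS hωT => hST ?_
    ext i
    rw [hCmem S ω hωS i, hCmem T ω hωT i]
  -- event is contained in A
  have hEvA : {ω | median t (fun i => X i ω) < a ∨ b < median t (fun i => X i ω)} ⊆ A := by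
    intro ω hω
    have hout : m ≤ (Sfun ω).card := by
      rcases hω with h | h
      · have h1 := (median_lt_iff hpos (fun i => X i ω) a).mp h
        refine le_trans h1 (Finset.card_le_card ?_)
        intro i hi
        simp only [Finset.mem_filter, Finset.mem_univ, true_and] at hi
        simp only [hSfun, Finset.mem_filter, Finset.mem_univ, true_and, hO,
          Set.mem_union, Set.mem_Iio, Set.mem_Ioi]
        exact Or.inl hi
      · have h1 := (median_gt_iff ht hpos (fun i => X i ω) b).mp h
        refine le_trans h1 (Finset.card_le_card ?_)
        intro i hi
        simp only [Finset.mem_filter, Finset.mem_univ, true_and] at hi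
        simp only [hSfun, Finset.mem_filter, Finset.mem_univ, true_and, hO,
          Set.mem_union, Set.mem_Iio, Set.mem_Ioi]
        exact Or.inr hi
    have hmemF : Sfun ω ∈ F := Finset.mem_filter.mpr ⟨Finset.mem_univ _, hout⟩
    exact Set.mem_biUnion hmemF (hωmem ω)
  -- the special event E
  set D : Fin t → Set ℝ :=
    fun i => if i = i0 then Set.Ioi b else if (i : ℕ) < m then Set.Iio a else I with hD
  have hDmeas : ∀ i, MeasurableSet (D i) := by
    intro i
    rw [hD]
    by_cases h1 : i = i0
    · simp [h1, measurableSet_Ioi]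
    · by_cases h2 : (i : ℕ) < m <;> simp [h1, h2, measurableSet_Iio, hImeas]
  set E : Set Ω := ⋂ i, (X i) ⁻¹' (D i) with hE
  have hEmeas : MeasurableSet E := MeasurableSet.iInter fun i => (hmeas i) (hDmeas i)
  have hEne : μ E ≠ 0 := by
    rw [hE, hcell _ hDmeas]
    rw [Finset.prod_ne_zero_iff]
    intro i _
    rw [hD]
    by_cases h1 : i = i0
    · simp only [h1, if_true]
      intro h
      have : (X i0) ⁻¹' Set.Ioi b = {ω | b < X i0 ω} := rfl
      rw [this] at h
      rw [hpU, h] at hpU0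
      simp at hpU0
    · by_cases h2 : (i : ℕ) < m
      · simp only [h1, h2, if_true, if_false]
        intro h
        have : (X i0) ⁻¹' Set.Iio a = {ω | X i0 ω < a} := rfl
        rw [this] at h
        rw [hpL, h] at hpL0
        simp at hpL0
      · simpa [h1, h2] using hPIne
  have hEA : E ⊆ A := by
    intro ω hω
    have hkey : ∀ i : Fin t, (i : ℕ) < m → i ∈ Sfun ω := by
      intro i hi
      have h : X i ω ∈ D i := Set.mem_iInter.mp hω i
      simp only [hSfun, Finset.mem_filter, Finset.mem_univ, true_and, hO,
        Set.mem_union]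
      by_cases h1 : i = i0
      · rw [hD] at h
        simp only [h1, if_true, Set.mem_Ioi] at h
        subst h1
        exact Or.inr h
      · rw [hD] at h
        simp only [h1, hi, if_true, if_false] at h
        exact Or.inl h
    have hcard : m ≤ (Sfun ω).card := by
      have hsub : Finset.univ.filter (fun i : Fin t => (i : ℕ) < m) ⊆ Sfun ω := by
        intro i hi
        exact hkey i (Finset.mem_filter.mp hi).2
      calc m = (Finset.univ.filter (fun i : Fin t => (i : ℕ) < m)).card :=
            (card_filter_val_lt hmt).symm
        _ ≤ (Sfun ω).card := Finset.card_le_card hsub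
    have hmemF : Sfun ω ∈ F := Finset.mem_filter.mpr ⟨Finset.mem_univ _, hcard⟩
    exact Set.mem_biUnion hmemF (hωmem ω)
  -- E is disjoint from the event
  have hdisj : Disjoint
      {ω | median t (fun i => X i ω) < a ∨ b < median t (fun i => X i ω)} E := by
    rw [Set.disjoint_left]
    intro ω hωEv hωE
    simp only [Set.mem_setOf_eq] at hωEv
    have hEfact : ∀ i : Fin t, X i ω ∈ D i := fun i => Set.mem_iInter.mp hωE i

    have hbelow : (Finset.univ.filter (fun i => X i ω < a)) ⊆
        (Finset.univ.filter (fun i : Fin t => (i : ℕ) < m)).erase i0 := by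
      intro i hi
      have hXi : X i ω < a := (Finset.mem_filter.mp hi).2
      have h := hEfact i
      rw [hD] at h
      by_cases h1 : i = i0
      · simp only [h1, if_true, Set.mem_Ioi] at h
        rw [h1] at hXi
        linarith
      · by_cases h2 : (i : ℕ) < m
        · exact Finset.mem_erase.mpr ⟨h1, Finset.mem_filter.mpr ⟨Finset.mem_univ i, h2⟩⟩
        · simp only [h1, h2, if_false, hI, Set.mem_Icc] at h
          linarith [h.1]
    have hbc : (Finset.univ.filter (fun i => X i ω < a)).card ≤ m - 1 := by
      refine le_trans (Finset.card_le_card hbelow) ?_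
      rw [Finset.card_erase_of_mem, card_filter_val_lt hmt]
      refine Finset.mem_filter.mpr ⟨Finset.mem_univ i0, ?_⟩
      simp [hi0]
      omega
    have habove : (Finset.univ.filter (fun i => b < X i ω)) ⊆ {i0} := by
      intro i hi
      have hXi : b < X i ω := (Finset.mem_filter.mp hi).2
      have h := hEfact i
      rw [hD] at h
      by_cases h1 : i = i0
      · simp [h1]
      · by_cases h2 : (i : ℕ) < m
        · simp only [h1, h2, if_true, if_false, Set.mem_Iio] at h
          linarith
        · simp only [h1, h2, if_false, hI, Set.mem_Icc] at h
          linarith [h.2]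
    have hac : (Finset.univ.filter (fun i => b < X i ω)).card ≤ 1 := by
      refine le_trans (Finset.card_le_card habove) ?_
      simp
    rcases hωEv with h | h
    · have := (median_lt_iff hpos (fun i => X i ω) a).mp h
      omega
    · have := (median_gt_iff ht hpos (fun i => X i ω) b).mp h
      omega
  -- value of μ A
  have hAval : (μ A).toReal = eta t m (pL + pU) := by
    have hg : μ A = ∑ k ∈ Finset.Icc m t, t.choose k • (PO ^ k * PI ^ (t - k)) := by
      rw [hmuA]
      have e1 : ∑ S ∈ F, μ (C S)
          = ∑ S : Finset (Fin t), (if m ≤ S.card then PO ^ S.card * PI ^ (t - S.card) else 0) := by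
        rw [hF, Finset.sum_filter]
        refine Finset.sum_congr rfl fun S _ => ?_
        by_cases h : m ≤ S.card <;> simp [h, hCmu S]
      rw [e1, ← Finset.powerset_univ, Finset.sum_powerset]
      have e2 : ∀ j ∈ Finset.range ((Finset.univ : Finset (Fin t)).card + 1),
          (∑ S ∈ Finset.powersetCard j (Finset.univ : Finset (Fin t)),
            (if m ≤ S.card then PO ^ S.card * PI ^ (t - S.card) else 0))
          = t.choose j • (if m ≤ j then PO ^ j * PI ^ (t - j) else 0) := by
        intro j _
        rw [show (∑ S ∈ Finset.powersetCard j (Finset.univ : Finset (Fin t)),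
            (if m ≤ S.card then PO ^ S.card * PI ^ (t - S.card) else 0))
          = ∑ S ∈ Finset.powersetCard j (Finset.univ : Finset (Fin t)),
            (fun k => if m ≤ k then PO ^ k * PI ^ (t - k) else 0) S.card from rfl]
        rw [Finset.sum_powersetCard j Finset.univ
          (fun k => if m ≤ k then PO ^ k * PI ^ (t - k) else 0)]
        congr 2
        simp
      rw [Finset.sum_congr rfl e2]
      have e3 : (Finset.range ((Finset.univ : Finset (Fin t)).card + 1)).filter (fun j => m ≤ j)
          = Finset.Icc m t := by
        ext j
        simp only [Finset.mem_filter, Finset.mem_range, Finset.mem_Icc, Finset.card_univ,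
          Fintype.card_fin]
        omega
      rw [← e3, Finset.sum_filter]
      refine Finset.sum_congr rfl fun j _ => ?_
      by_cases h : m ≤ j <;> simp [h]
    rw [hg, eta]
    rw [ENNReal.toReal_sum]
    · refine Finset.sum_congr rfl fun k hk => ?_
      rw [nsmul_eq_mul, ENNReal.toReal_mul, ENNReal.toReal_natCast, ENNReal.toReal_mul,
        ENNReal.toReal_pow, ENNReal.toReal_pow, hPOreal, hPIreal, mul_assoc]
    · intro k _
      rw [nsmul_eq_mul]
      exact ENNReal.mul_ne_top (ENNReal.natCast_ne_top _)
        (ENNReal.mul_ne_top (ENNReal.pow_ne_top (measure_ne_top _ _))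
          (ENNReal.pow_ne_top (measure_ne_top _ _)))
  -- conclusion
  have hkey2 : μ {ω | median t (fun i => X i ω) < a ∨ b < median t (fun i => X i ω)} + μ E
      ≤ μ A := by
    rw [← measure_union hdisj hEmeas]
    exact measure_mono (Set.union_subset hEvA hEA)
  have h1 : (μ {ω | median t (fun i => X i ω) < a ∨ b < median t (fun i => X i ω)}).toReal
      + (μ E).toReal ≤ (μ A).toReal := by
    rw [← ENNReal.toReal_add (measure_ne_top μ _) (measure_ne_top μ _)]
    exact ENNReal.toReal_mono (measure_ne_top μ _) hkey2
  have hEpos : 0 < (μ E).toReal := ENNReal.toReal_pos hEne (measure_ne_top μ _)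
  linarith [hAval ▸ h1]
end

section
/- Let ε be a real number with 3 ≤ ε < 4√2 − 1, and let Z be a nonnegative real-valued random variable with finite second moment satisfying σ²[Z] ≤ E[Z]. If E[Z] ≥ 4·pivot(ε), then P(Z < thresh(ε)) ≤ 1/18.19. -/
open MeasureTheory ProbabilityTheory

/-- `pivot ε = 9.84·(1 + 1/ε)²`. -/
noncomputable def pivot (ε : ℝ) : ℝ := 9.84 * (1 + 1 / ε) ^ 2

/-- `thresh ε = 9.84·(1 + ε/(1+ε))·(1 + 1/ε)²`. -/
noncomputable def thresh (ε : ℝ) : ℝ := 9.84 * (1 + ε / (1 + ε)) * (1 + 1 / ε) ^ 2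

/-!
Cantelli's inequality `P(Z ≤ E Z - a) ≤ σ² / (σ² + a²)` with `a = E Z - thresh ε`, together with
`σ² ≤ E Z`, reduces the claim to `17.19 · E Z ≤ (E Z - thresh ε)²`. Since the right side minus the
left grows in `E Z` beyond `4 · pivot ε`, it suffices to check it there, where it reads
`9.84 · (2 + 3/ε)² ≥ 4 · 17.19`; this is what the bound `ε < 4√2 - 1` guarantees.
-/

namespace ProbabilityTheory

variable {Ω : Type*} [MeasurableSpace Ω] {μ : Measure Ω} [IsProbabilityMeasure μ] {X : Ω → ℝ}

lemma integral_integral_add_sub_sq (hX : MemLp X 2 μ) (c : ℝ) :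
    ∫ ω, (μ[X] + c - X ω) ^ 2 ∂μ = Var[X; μ] + c ^ 2 := by
  have hY : MemLp (fun ω ↦ μ[X] + c - X ω) 2 μ := (memLp_const _).sub hX
  have hmean : ∫ ω, (μ[X] + c - X ω) ∂μ = c := by
    rw [integral_sub (integrable_const _) (hX.integrable one_le_two), integral_const]
    simp
  have hvar := variance_eq_sub hY
  rw [variance_const_sub hX.1, hmean] at hvar
  rw [hvar]
  simp only [Pi.pow_apply, sub_add_cancel]

/-- **Cantelli's inequality**. -/
theorem measureReal_le_integral_sub_le_variance_div (hX : MemLp X 2 μ) {a : ℝ} (ha : 0 < a) :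
    μ.real {ω | X ω ≤ μ[X] - a} ≤ Var[X; μ] / (Var[X; μ] + a ^ 2) := by
  set v := Var[X; μ]
  have hv : 0 ≤ v := variance_nonneg X μ
  -- Markov's inequality for `(μ[X] + c - X)²` at the optimal shift `c = v / a`
  set c := v / a
  have hac : 0 < a + c := by positivity
  have hsub : {ω | X ω ≤ μ[X] - a} ⊆ {ω | (a + c) ^ 2 ≤ (μ[X] + c - X ω) ^ 2} := fun ω hω ↦
    pow_le_pow_left₀ hac.le (by simp only [Set.mem_ofPred_eq] at hω; linarith) 2
  have hmarkov := mul_meas_ge_le_integral_of_nonneg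
    (ae_of_all μ fun ω ↦ sq_nonneg (μ[X] + c - X ω)) ((memLp_const _).sub hX).integrable_sq
    ((a + c) ^ 2)
  rw [integral_integral_add_sub_sq hX] at hmarkov
  calc μ.real {ω | X ω ≤ μ[X] - a}
      ≤ μ.real {ω | (a + c) ^ 2 ≤ (μ[X] + c - X ω) ^ 2} := measureReal_mono hsub
    _ ≤ (v + c ^ 2) / (a + c) ^ 2 := by rw [le_div_iff₀ (by positivity)]; linarith
    _ = v / (v + a ^ 2) := by simp only [c]; field_simp; ring

end ProbabilityTheory

lemma four_mul_pivot_sub_thresh {ε : ℝ} (hε : 0 < ε) :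
    4 * pivot ε - thresh ε = 9.84 * (1 + 1 / ε) * (2 + 3 / ε) := by
  unfold pivot thresh
  field_simp
  ring

lemma thresh_lt_four_mul_pivot {ε : ℝ} (hε : 0 < ε) : thresh ε < 4 * pivot ε := by
  have := four_mul_pivot_sub_thresh hε
  have : 0 < 9.84 * (1 + 1 / ε) * (2 + 3 / ε) := by positivity
  linarith

lemma mul_le_sq_sub_thresh {ε m : ℝ} (hlo : 0 < ε) (hhi : ε < 4 * Real.sqrt 2 - 1)
    (hm : 4 * pivot ε ≤ m) : 17.19 * m ≤ (m - thresh ε) ^ 2 := by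
  have hu : 0.2147 < 1 / ε := by
    have : Real.sqrt 2 < 1.41422 := by
      nlinarith [Real.sq_sqrt (show (0 : ℝ) ≤ 2 by norm_num), Real.sqrt_nonneg 2]
    rw [lt_div_iff₀ hlo]
    nlinarith
  have hA := four_mul_pivot_sub_thresh hlo
  have hA_ge : 19.68 ≤ 4 * pivot ε - thresh ε := by
    rw [hA]
    calc (19.68 : ℝ) = 9.84 * 1 * 2 := by norm_num
      _ ≤ 9.84 * (1 + 1 / ε) * (2 + 3 / ε) := by
        gcongr <;> simp only [le_add_iff_nonneg_right] <;> positivity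
  have hA_sq : 4 * 17.19 * pivot ε ≤ (4 * pivot ε - thresh ε) ^ 2 := by
    have hkey : 4 * 17.19 ≤ 9.84 * (2 + 3 / ε) ^ 2 := by
      rw [show 3 / ε = 3 * (1 / ε) by ring]; nlinarith
    have : (4 * pivot ε - thresh ε) ^ 2 - 4 * 17.19 * pivot ε
        = 9.84 * (1 + 1 / ε) ^ 2 * (9.84 * (2 + 3 / ε) ^ 2 - 4 * 17.19) := by
      rw [hA, pivot]; ring
    nlinarith [mul_nonneg (by positivity : (0 : ℝ) ≤ 9.84 * (1 + 1 / ε) ^ 2) (sub_nonneg.2 hkey)]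
  have hd : 0 ≤ m - 4 * pivot ε := by linarith
  have : m - thresh ε = (4 * pivot ε - thresh ε) + (m - 4 * pivot ε) := by ring
  rw [this]
  nlinarith

theorem stmt_18_general {Ω : Type*} [MeasurableSpace Ω] (μ : Measure Ω) [IsProbabilityMeasure μ]
    (ε : ℝ) (hlo : 3 ≤ ε) (hhi : ε < 4 * Real.sqrt 2 - 1)
    (Z : Ω → ℝ) (hL2 : MemLp Z 2 μ)
    (hvar : variance Z μ ≤ ∫ x, Z x ∂μ)
    (hE : 4 * pivot ε ≤ ∫ x, Z x ∂μ) :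
    (μ {ω | Z ω < thresh ε}).toReal ≤ 1 / 18.19 := by
  set a := μ[Z] - thresh ε
  have hmain := mul_le_sq_sub_thresh (by linarith) hhi hE
  have ha : 0 < a := by linarith [thresh_lt_four_mul_pivot (show 0 < ε by linarith)]
  have hv := variance_nonneg Z μ
  calc (μ {ω | Z ω < thresh ε}).toReal
      ≤ μ.real {ω | Z ω ≤ μ[Z] - a} :=
        measureReal_mono fun ω (hω : Z ω < thresh ε) ↦ show Z ω ≤ μ[Z] - a by linarith
    _ ≤ Var[Z; μ] / (Var[Z; μ] + a ^ 2) := measureReal_le_integral_sub_le_variance_div hL2 ha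
    _ ≤ 1 / 18.19 := by
      rw [div_le_div_iff₀ (by positivity) (by norm_num)]
      linarith

theorem stmt_18 {Ω : Type*} [MeasurableSpace Ω] (μ : Measure Ω) [IsProbabilityMeasure μ]
    (ε : ℝ) (hlo : 3 ≤ ε) (hhi : ε < 4 * Real.sqrt 2 - 1)
    (Z : Ω → ℝ) (hZnonneg : ∀ ω, 0 ≤ Z ω) (hL2 : MemLp Z 2 μ)
    (hvar : variance Z μ ≤ ∫ x, Z x ∂μ)
    (hE : 4 * pivot ε ≤ ∫ x, Z x ∂μ) :
    (μ {ω | Z ω < thresh ε}).toReal ≤ 1 / 18.19 :=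
  stmt_18_general μ ε hlo hhi Z hL2 hvar hE
end
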